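/- Equivalence of program rules (completeness direction): if there is a transition with justifications S^J ↦_{rf} T' using a translated rule rf, then erasing all justification annotations and deleting all rem-constraints from S^J and T' yields a valid standard CHR transition S ↦_r T with the original rule r. -/

import Mathlib

variable {C J : Type*} [DecidableEq J]

/-- A (generalized) simpagation rule: kept head, removed head, guard and body.
Built-ins in the body are restricted, so the body is a multiset of
user-defined constraints and the guard is a proposition. -/
structure Rule (C : Type*) where
  kept : Multiset C
  removed : Multiset C
  guard : Prop
  body : Multiset C

/-- Standard CHR transition with rule `r`. -/
def Step (r : Rule C) (S T : Multiset C) : Prop :=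
  r.guard ∧ ∃ G : Multiset C,
    S = r.kept + r.removed + G ∧ T = r.kept + r.body + G

/-- Annotated constraints: user constraints with a justification set, and
reserved `rem` constraints remembering a removed annotated constraint,
themselves annotated with a justification set. -/
inductive AConstr (C J : Type*) where
  | user : C → Finset J → AConstr C J
  | rem : C → Finset J → Finset J → AConstr C J

/-- Erasure: drop justification annotations and delete `rem` constraints. -/
def eraseA (S : Multiset (AConstr C J)) : Multiset C :=
  S.filterMap fun a => match a with
    | AConstr.user c _ => some c
    | AConstr.rem _ _ _ => none

/-- Transition with the translated rule `rf` of rule `r`: the head is matched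
against annotated constraints, each removed constraint `R^{F_j}` is remembered
as `rem(R^{F_j})^F`, and every body constraint is annotated with the union `F`
of all head justification sets. -/
def JStep (r : Rule C) (S T : Multiset (AConstr C J)) : Prop :=
  r.guard ∧ ∃ (K R : Multiset (C × Finset J)) (G : Multiset (AConstr C J)),
    K.map Prod.fst = r.kept ∧ R.map Prod.fst = r.removed ∧
    S = K.map (fun p => AConstr.user p.1 p.2) +
        R.map (fun p => AConstr.user p.1 p.2) + G ∧
    T = K.map (fun p => AConstr.user p.1 p.2) +
        R.map (fun p => AConstr.rem p.1 p.2
          ((K.map Prod.snd).sup ∪ (R.map Prod.snd).sup)) +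
        r.body.map (fun b => AConstr.user b
          ((K.map Prod.snd).sup ∪ (R.map Prod.snd).sup)) + G

omit [DecidableEq J] in
theorem eraseA_add (S T : Multiset (AConstr C J)) :
    eraseA (S + T) = eraseA S + eraseA T :=
  Multiset.filterMap_add _ S T

omit [DecidableEq J] in
theorem eraseA_map_user {α : Type*} (f : α → C) (g : α → Finset J) (M : Multiset α) :
    eraseA (M.map fun a => AConstr.user (f a) (g a)) = M.map f :=
  (Multiset.filterMap_map _ _ M).trans (congrFun (Multiset.filterMap_eq_map f) M)

omit [DecidableEq J] in
theorem eraseA_map_rem {α : Type*} (f : α → C) (g h : α → Finset J) (M : Multiset α) :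
    eraseA (M.map fun a => AConstr.rem (f a) (g a) (h a)) = 0 := by
  induction M using Multiset.induction with
  | empty => rfl
  | cons a M ih => rwa [Multiset.map_cons, eraseA, Multiset.filterMap_cons_none _ _ rfl]

/-- Completeness direction of the equivalence of program rules: any transition
of the translated rule, after erasing justification annotations and deleting
all `rem` constraints, is a valid standard transition with the original rule. -/
theorem jstep_projects_to_step (r : Rule C) (S' T' : Multiset (AConstr C J))
    (h : JStep r S' T') :
    Step r (eraseA S') (eraseA T') := by
  obtain ⟨hguard, K, R, G, hK, hR, rfl, rfl⟩ := h
  refine ⟨hguard, eraseA G, ?_, ?_⟩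
  · rw [eraseA_add, eraseA_add, eraseA_map_user, eraseA_map_user, hK, hR]
  · rw [eraseA_add, eraseA_add, eraseA_add, eraseA_map_user, eraseA_map_rem, hK, add_zero,
      eraseA_map_user (fun b => b), Multiset.map_id']
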